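/- arXiv:1906.00380 — 6 statements merged into one kernel-verified Lean document; each statement's English description precedes it below -/
import Mathlib

section
/- Let q be a prime power, let a_1, ..., a_n be distinct elements of F_q, let v_1, ..., v_n be nonzero elements of F_q, and assume 1 ≤ k ≤ ⌊n/2⌋. Then the generalized Reed–Solomon code GRS_k(a, v) is Euclidean self-orthogonal if and only if there exists a nonzero polynomial λ(x) ∈ F_q[x] of degree at most n − 2k such that v_i^2 = λ(a_i) · L_a(a_i)^{−1} and λ(a_i) ≠ 0 for every 1 ≤ i ≤ n. -/
/-!
For distinct nodes `a i` and `P` of degree `< n`, Lagrange interpolation gives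
`∑ i, P(a i) / L_a(a i) = coeff P (n - 1)`. Let `λ` interpolate `v i ^ 2 * L_a(a i)`, so that
`v i ^ 2 = λ(a i) / L_a(a i)`. Self-orthogonality says that `∑ i, v i ^ 2 h(a i) = 0` for
every `h` of degree `≤ 2k - 2`; with `h = X ^ (n - 1 - deg λ)` the sum is the leading
coefficient of `λ`, which forces `deg λ ≤ n - 2k`. Conversely, if `deg λ ≤ n - 2k` then
`λ f g` has degree `< n - 1` for all codeword polynomials `f, g`, so its coefficient of
`X ^ (n - 1)` vanishes.
-/

open Finset

variable {F : Type*} [Field F]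

/-- The generalized Reed–Solomon code
`GRS_k(a, v) = { (v₁ f(a₁), …, vₙ f(aₙ)) : f ∈ F[x], deg f ≤ k - 1 }`,
realized as the image of the space of polynomials of degree `< k` under the
evaluation-then-scale linear map. -/
noncomputable def GRSCode (n k : ℕ) (a v : Fin n → F) : Submodule F (Fin n → F) :=
  (Polynomial.degreeLT F k).map (LinearMap.pi fun i => v i • Polynomial.leval (a i))

open Polynomial

namespace Lagrange

variable {ι : Type*} [DecidableEq ι] {s : Finset ι} {v : ι → F} {P : F[X]}

theorem sum_eval_div_eq_zero_of_degree_lt (hvs : Set.InjOn v s) (hP : P.degree < ↑(#s - 1)) :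
    ∑ i ∈ s, P.eval (v i) / ∏ j ∈ s.erase i, (v i - v j) = 0 := by
  rw [← coeff_eq_sum hvs (hP.trans_le (by exact_mod_cast Nat.sub_le _ _)),
    coeff_eq_zero_of_degree_lt hP]

theorem sum_eval_mul_pow_div_eq_leadingCoeff (hvs : Set.InjOn v s) (hP0 : P ≠ 0)
    (hP : P.degree < #s) :
    ∑ i ∈ s, P.eval (v i) * v i ^ (#s - 1 - P.natDegree) / ∏ j ∈ s.erase i, (v i - v j) =
      P.leadingCoeff := by
  set m := #s - 1 - P.natDegree
  have hd : P.natDegree < #s := (natDegree_lt_iff_degree_lt hP0).2 hP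
  have hXP : (X ^ m * P).degree < (#s : WithBot ℕ) := by
    refine degree_le_natDegree.trans_lt ?_
    rw [natDegree_X_pow_mul (n := m) hP0]
    exact_mod_cast (by omega : P.natDegree + m < #s)
  calc _ = ∑ i ∈ s, (X ^ m * P).eval (v i) / ∏ j ∈ s.erase i, (v i - v j) := by
          simp only [eval_mul, eval_pow, eval_X, mul_comm]
    _ = (X ^ m * P).coeff (#s - 1) := (coeff_eq_sum hvs hXP).symm
    _ = P.leadingCoeff := by
          rw [coeff_X_pow_mul', if_pos (Nat.sub_le _ _), show #s - 1 - m = P.natDegree by omega]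
          rfl

theorem natDegree_add_lt_of_forall_sum_eval_mul_pow_div_eq_zero (hvs : Set.InjOn v s)
    (hP0 : P ≠ 0) (hP : P.degree < #s) {N : ℕ}
    (h : ∀ m < N, ∑ i ∈ s, P.eval (v i) * v i ^ m / ∏ j ∈ s.erase i, (v i - v j) = 0) :
    P.natDegree + N < #s := by
  have hd : P.natDegree < #s := (natDegree_lt_iff_degree_lt hP0).2 hP
  by_contra! hle
  exact leadingCoeff_ne_zero.2 hP0 <|
    (sum_eval_mul_pow_div_eq_leadingCoeff hvs hP0 hP).symm.trans (h _ (by omega))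

end Lagrange

def IsSelfOrthogonal {n : ℕ} (C : Submodule F (Fin n → F)) : Prop :=
  ∀ b ∈ C, ∀ c ∈ C, ∑ i, b i * c i = 0

variable {n k : ℕ} {a v : Fin n → F}

theorem forall_mem_GRSCode {p : (Fin n → F) → Prop} :
    (∀ b ∈ GRSCode n k a v, p b) ↔ ∀ f ∈ degreeLT F k, p fun i => v i * f.eval (a i) := by
  simp only [GRSCode, Submodule.mem_map, forall_exists_index, and_imp, forall_apply_eq_imp_iff₂]
  rfl

theorem isSelfOrthogonal_GRSCode_iff :
    IsSelfOrthogonal (GRSCode n k a v) ↔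
      ∀ f ∈ degreeLT F k, ∀ g ∈ degreeLT F k, ∑ i, v i ^ 2 * (f * g).eval (a i) = 0 := by
  simp only [IsSelfOrthogonal, forall_mem_GRSCode, eval_mul]
  exact forall₄_congr fun f _ g _ => Eq.congr_left (sum_congr rfl fun i _ => by ring)

theorem sum_sq_mul_pow_eq_zero_of_isSelfOrthogonal (hso : IsSelfOrthogonal (GRSCode n k a v))
    {m : ℕ} (hm : m + 1 < 2 * k) : ∑ i, v i ^ 2 * a i ^ m = 0 := by
  obtain ⟨r, t, hr, ht, rfl⟩ : ∃ r t, r < k ∧ t < k ∧ r + t = m :=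
    ⟨min m (k - 1), m - min m (k - 1), by omega, by omega, by omega⟩
  have hX : ∀ j < k, (X ^ j : F[X]) ∈ degreeLT F k := fun j hj =>
    mem_degreeLT.2 (by rw [degree_X_pow]; exact_mod_cast hj)
  simpa [pow_add] using isSelfOrthogonal_GRSCode_iff.1 hso _ (hX r hr) _ (hX t ht)

theorem exists_poly_of_isSelfOrthogonal_GRSCode (ha : Function.Injective a) (hv : ∀ i, v i ≠ 0)
    (hn : 0 < n) (hso : IsSelfOrthogonal (GRSCode n k a v)) :
    ∃ lam : F[X], lam ≠ 0 ∧ lam.degree ≤ (n - 2 * k : ℕ) ∧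
      ∀ i, v i ^ 2 = lam.eval (a i) * (∏ j ∈ univ.erase i, (a i - a j))⁻¹ ∧
        lam.eval (a i) ≠ 0 := by
  have hL : ∀ i, ∏ j ∈ univ.erase i, (a i - a j) ≠ 0 := fun i =>
    prod_ne_zero_iff.2 fun j hj => sub_ne_zero.2 (ha.ne (mem_erase.1 hj).1.symm)
  set lam := Lagrange.interpolate univ a fun i => v i ^ 2 * ∏ j ∈ univ.erase i, (a i - a j)
  have heval : ∀ i, lam.eval (a i) = v i ^ 2 * ∏ j ∈ univ.erase i, (a i - a j) := fun i =>
    Lagrange.eval_interpolate_at_node _ ha.injOn (mem_univ i)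
  have hne : ∀ i, lam.eval (a i) ≠ 0 := fun i => by
    rw [heval]; exact mul_ne_zero (pow_ne_zero _ (hv i)) (hL i)
  have hlam : lam ≠ 0 := fun h => hne ⟨0, hn⟩ (by rw [h, eval_zero])
  have hdeg := Lagrange.natDegree_add_lt_of_forall_sum_eval_mul_pow_div_eq_zero (N := 2 * k - 1)
    ha.injOn hlam (Lagrange.degree_interpolate_lt _ ha.injOn) fun m hm => by
      rw [← sum_sq_mul_pow_eq_zero_of_isSelfOrthogonal hso (m := m) (by omega)]
      refine sum_congr rfl fun i _ => ?_
      rw [heval]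
      field_simp [hL i]
  rw [card_fin] at hdeg
  refine ⟨lam, hlam, degree_le_of_natDegree_le (by omega), fun i => ⟨?_, hne i⟩⟩
  rw [heval, mul_inv_cancel_right₀ (hL i)]

theorem isSelfOrthogonal_GRSCode_of_sq_eq (ha : Function.Injective a) (hkn : 2 * k ≤ n)
    {lam : F[X]} (hdeg : lam.degree ≤ (n - 2 * k : ℕ))
    (hval : ∀ i, v i ^ 2 = lam.eval (a i) * (∏ j ∈ univ.erase i, (a i - a j))⁻¹) :
    IsSelfOrthogonal (GRSCode n k a v) := by
  rw [isSelfOrthogonal_GRSCode_iff]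
  intro f hf g hg
  rcases eq_or_ne f 0 with rfl | hf0
  · simp
  rcases eq_or_ne g 0 with rfl | hg0
  · simp
  have hfk := (natDegree_lt_iff_degree_lt hf0).2 (mem_degreeLT.1 hf)
  have hgk := (natDegree_lt_iff_degree_lt hg0).2 (mem_degreeLT.1 hg)
  have hlam := natDegree_le_iff_degree_le.2 hdeg
  have hprod : (lam * (f * g)).natDegree < n - 1 := by
    have := natDegree_mul_le (p := lam) (q := f * g)
    have := natDegree_mul_le (p := f) (q := g)
    omega
  calc ∑ i, v i ^ 2 * (f * g).eval (a i)
      = ∑ i ∈ univ, (lam * (f * g)).eval (a i) / ∏ j ∈ univ.erase i, (a i - a j) :=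
        sum_congr rfl fun i _ => by simp only [hval, eval_mul]; ring
    _ = 0 := Lagrange.sum_eval_div_eq_zero_of_degree_lt ha.injOn
        (degree_le_natDegree.trans_lt (by simpa using hprod))

theorem GRSCode_selfOrthogonal_iff_general (F : Type*) [Field F]
    {n k : ℕ} (hk1 : 1 ≤ k) (hk2 : k ≤ n / 2)
    (a : Fin n → F) (ha : Function.Injective a)
    (v : Fin n → F) (hv : ∀ i, v i ≠ 0) :
    (∀ b ∈ GRSCode n k a v, ∀ c ∈ GRSCode n k a v, ∑ i, b i * c i = 0) ↔
      ∃ lam : Polynomial F, lam ≠ 0 ∧ lam.degree ≤ (n - 2 * k : ℕ) ∧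
        ∀ i, v i ^ 2 = lam.eval (a i) * (∏ j ∈ Finset.univ.erase i, (a i - a j))⁻¹ ∧
          lam.eval (a i) ≠ 0 :=
  ⟨exists_poly_of_isSelfOrthogonal_GRSCode ha hv (by omega),
    fun ⟨_, _, hdeg, hval⟩ =>
      isSelfOrthogonal_GRSCode_of_sq_eq ha (by omega) hdeg fun i => (hval i).1⟩

/-- Lemma 2: criterion for Euclidean self-orthogonality of GRS codes.
Let `a 0, …, a (n-1)` be distinct elements of the finite field `F` and `v i` nonzero elements,
and let `1 ≤ k ≤ ⌊n/2⌋`.  Then `GRS_k(a, v)` is Euclidean self-orthogonal iff there exists a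
nonzero polynomial `λ` of degree at most `n - 2k` with
`v i ^ 2 = λ(a i) · L_a(a i)⁻¹ ≠ 0` for all `i`, where `L_a(a i) = ∏_{j ≠ i} (a i - a j)`. -/
theorem GRSCode_selfOrthogonal_iff (F : Type*) [Field F] [Fintype F]
    {n k : ℕ} (hk1 : 1 ≤ k) (hk2 : k ≤ n / 2)
    (a : Fin n → F) (ha : Function.Injective a)
    (v : Fin n → F) (hv : ∀ i, v i ≠ 0) :
    (∀ b ∈ GRSCode n k a v, ∀ c ∈ GRSCode n k a v, ∑ i, b i * c i = 0) ↔
      ∃ lam : Polynomial F, lam ≠ 0 ∧ lam.degree ≤ (n - 2 * k : ℕ) ∧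
        ∀ i, v i ^ 2 = lam.eval (a i) * (∏ j ∈ Finset.univ.erase i, (a i - a j))⁻¹ ∧
          lam.eval (a i) ≠ 0 :=
  GRSCode_selfOrthogonal_iff_general F hk1 hk2 a ha v hv
end

section
/- Let q be an odd prime power, let n be an even integer with n ≤ q, set k = n/2, and let a_1, ..., a_n be distinct elements of F_q. If there exists λ ∈ F_q^* such that λ · L_a(a_i)^{−1} is a nonzero square in F_q for all 1 ≤ i ≤ n, then there exist nonzero v_1, ..., v_n ∈ F_q with v_i^2 = λ · L_a(a_i)^{−1} such that the code GRS_k(a, v) is an MDS Euclidean self-dual code of length n (i.e., GRS_k(a,v) has dimension n/2, minimum distance n/2 + 1, and equals its Euclidean dual). -/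
/-!
With `v i ^ 2 = λ · L_a(a i)⁻¹`, the inner product of the codewords of `f` and `g` is
`λ · ∑ i, (f g)(a i) · L_a(a i)⁻¹`, the coefficient of `X ^ (n - 1)` in the Lagrange interpolant
of `f g`; it vanishes because `deg (f g) ≤ n - 2`. So the code is self-orthogonal, and since a
polynomial of degree `< n/2` is determined by its values at the `n` distinct points, the code has
dimension `n/2` and therefore equals its dual. It is MDS because a nonzero polynomial of degree
`< k` vanishes at fewer than `k` of the points, and the nodal polynomial of `k - 1` points shows
that the bound is attained.
-/

open Finset

variable {F : Type*} [Field F]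

/-- The Euclidean dual code `C^⊥ = { u : ∀ c ∈ C, ∑ i, u i * c i = 0 }`. -/
def dualCode {n : ℕ} (C : Submodule F (Fin n → F)) : Submodule F (Fin n → F) where
  carrier := { u | ∀ c ∈ C, ∑ i, u i * c i = 0 }
  add_mem' := by
    intro u w hu hw c hc
    simp only [Set.mem_setOf_eq] at hu hw
    simp [Pi.add_apply, add_mul, Finset.sum_add_distrib, hu c hc, hw c hc]
  zero_mem' := by intro c hc; simp
  smul_mem' := by
    intro r u hu c hc
    simp only [Set.mem_setOf_eq] at hu
    simp [Pi.smul_apply, smul_eq_mul, mul_assoc, ← Finset.mul_sum, hu c hc]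

/-- `C` has minimum Hamming distance `d`. -/
def IsMinDist [DecidableEq F] {n : ℕ} (C : Submodule F (Fin n → F)) (d : ℕ) : Prop :=
  (∀ c ∈ C, c ≠ 0 → d ≤ hammingNorm c) ∧ ∃ c ∈ C, c ≠ 0 ∧ hammingNorm c = d

open Polynomial

namespace Polynomial

theorem mul_mem_degreeLT {R : Type*} [Semiring R] {f g : R[X]} {k l : ℕ}
    (hf : f ∈ degreeLT R k) (hg : g ∈ degreeLT R l) : f * g ∈ degreeLT R (k + l - 1) := by
  rcases eq_or_ne f 0 with rfl | hf0
  · simp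
  rcases eq_or_ne g 0 with rfl | hg0
  · simp
  rw [mem_degreeLT] at hf hg ⊢
  have hfk := (natDegree_lt_iff_degree_lt hf0).2 hf
  have hgl := (natDegree_lt_iff_degree_lt hg0).2 hg
  calc (f * g).degree ≤ f.degree + g.degree := degree_mul_le f g
    _ = ((f.natDegree + g.natDegree : ℕ) : WithBot ℕ) := by
      rw [degree_eq_natDegree hf0, degree_eq_natDegree hg0]; rfl
    _ < ((k + l - 1 : ℕ) : WithBot ℕ) := by exact_mod_cast (by omega)

theorem card_filter_eval_eq_zero_le {R ι : Type*} [CommRing R] [IsDomain R] [DecidableEq R]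
    [Fintype ι] {a : ι → R} (ha : Function.Injective a) {f : R[X]} (hf : f ≠ 0) :
    #{i | f.eval (a i) = 0} ≤ f.natDegree := by
  rw [← card_image_of_injective _ ha]
  refine card_le_degree_of_subset_roots fun x hx => ?_
  obtain ⟨i, hi, rfl⟩ := mem_image.1 hx
  exact (mem_roots hf).2 (mem_filter.1 hi).2

end Polynomial

namespace Lagrange

variable {ι : Type*} [DecidableEq ι] {s : Finset ι} {v : ι → F}

theorem basis_eq_C_nodalWeight_mul_nodal_erase (s : Finset ι) (v : ι → F) (i : ι) :
    Lagrange.basis s v i = C (nodalWeight s v i) * nodal (s.erase i) v := by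
  simp_rw [Lagrange.basis, basisDivisor, nodalWeight, nodal, prod_mul_distrib, map_prod]

theorem coeff_basis_card_sub_one {i : ι} (hi : i ∈ s) :
    (Lagrange.basis s v i).coeff (#s - 1) = nodalWeight s v i := by
  rw [basis_eq_C_nodalWeight_mul_nodal_erase, coeff_C_mul, ← card_erase_of_mem hi,
    ← natDegree_nodal (s := s.erase i) (v := v), nodal_monic.coeff_natDegree, mul_one]

theorem coeff_interpolate_card_sub_one (r : ι → F) :
    (interpolate s v r).coeff (#s - 1) = ∑ i ∈ s, r i * nodalWeight s v i := by
  rw [interpolate_apply, finsetSum_coeff]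
  exact sum_congr rfl fun i hi => by rw [coeff_C_mul, coeff_basis_card_sub_one hi]

/-- `h` is its own interpolant, whose coefficient of `X ^ (#s - 1)` is this sum. -/
theorem sum_eval_mul_nodalWeight_eq_zero (hvs : Set.InjOn v s) {h : F[X]}
    (hdeg : h.degree < ↑(#s - 1)) : ∑ i ∈ s, h.eval (v i) * nodalWeight s v i = 0 := by
  have hlt : h.degree < #s := hdeg.trans_le (by exact_mod_cast Nat.sub_le #s 1)
  rw [← coeff_interpolate_card_sub_one, ← eq_interpolate hvs hlt]
  exact coeff_eq_zero_of_degree_lt hdeg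

end Lagrange

theorem dualCode_eq_comap_dualAnnihilator {n : ℕ} (C : Submodule F (Fin n → F)) :
    dualCode C = C.dualAnnihilator.comap (dotProductEquiv F (Fin n)).toLinearMap := by
  ext u
  simp [dualCode, Submodule.mem_dualAnnihilator, dotProduct]

theorem finrank_add_finrank_dualCode {n : ℕ} (C : Submodule F (Fin n → F)) :
    Module.finrank F C + Module.finrank F (dualCode C) = n := by
  rw [dualCode_eq_comap_dualAnnihilator,
    (LinearEquiv.ofSubmodule' (dotProductEquiv F (Fin n)) _).finrank_eq,
    Subspace.finrank_add_finrank_dualAnnihilator_eq, Module.finrank_fin_fun]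

theorem eq_dualCode_of_le_of_two_mul_finrank {n : ℕ} {C : Submodule F (Fin n → F)}
    (hle : C ≤ dualCode C) (hC : 2 * Module.finrank F C = n) : C = dualCode C :=
  Submodule.eq_of_le_of_finrank_le hle (by have := finrank_add_finrank_dualCode C; omega)

namespace GRSCode

variable {n k : ℕ} {a v : Fin n → F}

noncomputable def encode (a v : Fin n → F) : F[X] →ₗ[F] Fin n → F :=
  LinearMap.pi fun i => v i • leval (a i)

theorem encode_apply (f : F[X]) (i : Fin n) : encode a v f i = v i * f.eval (a i) := rfl

theorem eq_map_encode : GRSCode n k a v = (degreeLT F k).map (encode a v) := rfl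

theorem hammingNorm_encode [DecidableEq F] (hv : ∀ i, v i ≠ 0) (f : F[X]) :
    hammingNorm (encode a v f) = #{i | f.eval (a i) ≠ 0} := by
  simp only [hammingNorm, encode_apply, ne_eq, mul_eq_zero, hv, false_or]

theorem injOn_encode (ha : Function.Injective a) (hv : ∀ i, v i ≠ 0) (hkn : k ≤ n) :
    Set.InjOn (encode a v) (degreeLT F k) := by
  refine LinearMap.disjoint_ker_iff_injOn.1 (LinearMap.disjoint_ker.2 fun f hf hf0 => ?_)
  refine eq_zero_of_degree_lt_of_eval_index_eq_zero (s := univ) ha.injOn ?_ fun i _ => ?_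
  · rw [card_univ, Fintype.card_fin]
    exact (mem_degreeLT.1 hf).trans_le (by exact_mod_cast hkn)
  · simpa [encode_apply, hv i] using congrFun hf0 i

theorem finrank_eq (ha : Function.Injective a) (hv : ∀ i, v i ≠ 0) (hkn : k ≤ n) :
    Module.finrank F (GRSCode n k a v) = k := by
  have hbij : Function.Bijective ((encode a v).submoduleMap (degreeLT F k)) :=
    ⟨LinearMap.submoduleMap_injective_of_injOn (injOn_encode ha hv hkn),
      LinearMap.submoduleMap_surjective _ _⟩
  rw [eq_map_encode, ← (LinearEquiv.ofBijective _ hbij).finrank_eq,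
    (degreeLTEquiv F k).finrank_eq, Module.finrank_fin_fun]

theorem le_hammingNorm [DecidableEq F] (ha : Function.Injective a) (hv : ∀ i, v i ≠ 0)
    {c : Fin n → F} (hc : c ∈ GRSCode n k a v) (hc0 : c ≠ 0) : n - k + 1 ≤ hammingNorm c := by
  rw [eq_map_encode] at hc
  obtain ⟨f, hf, rfl⟩ := Submodule.mem_map.1 hc
  have hf0 : f ≠ 0 := by rintro rfl; exact hc0 (map_zero _)
  have hroots := card_filter_eval_eq_zero_le ha hf0
  have hfk := (natDegree_lt_iff_degree_lt hf0).2 (mem_degreeLT.1 hf)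
  have hsplit := card_filter_add_card_filter_not
    (s := (univ : Finset (Fin n))) (p := fun i => f.eval (a i) = 0)
  have hpos := hammingNorm_pos_iff.2 hc0
  rw [card_univ, Fintype.card_fin] at hsplit
  rw [hammingNorm_encode hv] at hpos ⊢
  simp only [ne_eq] at hpos ⊢
  omega

/-- The witness is the nodal polynomial of `k - 1` of the points. -/
theorem exists_hammingNorm_eq [DecidableEq F] (ha : Function.Injective a) (hv : ∀ i, v i ≠ 0)
    (hk : 1 ≤ k) (hkn : k ≤ n) :
    ∃ c ∈ GRSCode n k a v, c ≠ 0 ∧ hammingNorm c = n - k + 1 := by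
  obtain ⟨T, -, hT⟩ := exists_subset_card_eq (s := (univ : Finset (Fin n))) (n := k - 1)
    (by rw [card_univ, Fintype.card_fin]; omega)
  have hmem : Lagrange.nodal T a ∈ degreeLT F k := by
    rw [mem_degreeLT, Lagrange.degree_nodal, hT]
    exact_mod_cast (by omega : k - 1 < k)
  have hzeros : ({i | (Lagrange.nodal T a).eval (a i) ≠ 0} : Finset (Fin n)) = Tᶜ := by
    ext i
    simp only [mem_filter, mem_univ, true_and, mem_compl, Lagrange.eval_nodal,
      prod_ne_zero_iff, sub_ne_zero, ha.ne_iff]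
    exact ⟨fun h hi => h i hi rfl, fun h j hj hij => h (hij ▸ hj)⟩
  have hweight : hammingNorm (encode a v (Lagrange.nodal T a)) = n - k + 1 := by
    rw [hammingNorm_encode hv, hzeros, card_compl, Fintype.card_fin, hT]
    omega
  refine ⟨encode a v (Lagrange.nodal T a), Submodule.mem_map_of_mem hmem, ?_, hweight⟩
  rw [← hammingNorm_ne_zero_iff, hweight]
  omega

theorem isMinDist [DecidableEq F] (ha : Function.Injective a) (hv : ∀ i, v i ≠ 0)
    (hk : 1 ≤ k) (hkn : k ≤ n) : IsMinDist (GRSCode n k a v) (n - k + 1) :=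
  ⟨fun _ hc hc0 => le_hammingNorm ha hv hc hc0, exists_hammingNorm_eq ha hv hk hkn⟩

theorem sum_mul_eq_zero {l : ℕ} {w : Fin n → F} (ha : Function.Injective a) (lam : F)
    (hvw : ∀ i, v i * w i = lam * Lagrange.nodalWeight univ a i) (hkl : k + l ≤ n)
    {c c' : Fin n → F} (hc : c ∈ GRSCode n k a v) (hc' : c' ∈ GRSCode n l a w) :
    ∑ i, c i * c' i = 0 := by
  rw [eq_map_encode] at hc hc'
  obtain ⟨f, hf, rfl⟩ := Submodule.mem_map.1 hc
  obtain ⟨g, hg, rfl⟩ := Submodule.mem_map.1 hc'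
  have hdeg : (f * g).degree < ↑(#(univ : Finset (Fin n)) - 1) := by
    rw [card_univ, Fintype.card_fin]
    exact (mem_degreeLT.1 (mul_mem_degreeLT hf hg)).trans_le (by exact_mod_cast (by omega))
  calc ∑ i, encode a v f i * encode a w g i
      = lam * ∑ i, (f * g).eval (a i) * Lagrange.nodalWeight univ a i := by
        rw [mul_sum]
        refine sum_congr rfl fun i _ => ?_
        rw [encode_apply, encode_apply, eval_mul, ← mul_mul_mul_comm, hvw i]
        ring
    _ = 0 := by rw [Lagrange.sum_eval_mul_nodalWeight_eq_zero ha.injOn hdeg, mul_zero]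

end GRSCode

theorem GRSCode_MDS_selfDual_general (F : Type*) [Field F] [DecidableEq F]
    {n : ℕ} (hn : Even n) (hn0 : 0 < n)
    (a : Fin n → F) (ha : Function.Injective a)
    (lam : F)
    (hsq : ∀ i, ∃ b : F, b ≠ 0 ∧
      lam * (∏ j ∈ Finset.univ.erase i, (a i - a j))⁻¹ = b ^ 2) :
    ∃ v : Fin n → F, (∀ i, v i ≠ 0) ∧
      (∀ i, v i ^ 2 = lam * (∏ j ∈ Finset.univ.erase i, (a i - a j))⁻¹) ∧
      Module.finrank F (GRSCode n (n / 2) a v) = n / 2 ∧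
      IsMinDist (GRSCode n (n / 2) a v) (n / 2 + 1) ∧
      GRSCode n (n / 2) a v = dualCode (GRSCode n (n / 2) a v) := by
  choose v hv hsq using hsq
  have hvv : ∀ i, v i * v i = lam * Lagrange.nodalWeight univ a i := fun i => by
    rw [← sq, ← hsq i, Lagrange.nodalWeight, prod_inv_distrib]
  have hk : 2 * (n / 2) = n := Nat.two_mul_div_two_of_even hn
  have hfinrank := GRSCode.finrank_eq ha hv (Nat.div_le_self n 2)
  refine ⟨v, hv, fun i => (hsq i).symm, hfinrank, ?_, ?_⟩
  · have hd : n - n / 2 + 1 = n / 2 + 1 := by omega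
    simpa only [hd] using GRSCode.isMinDist ha hv (by omega) (Nat.div_le_self n 2)
  · refine eq_dualCode_of_le_of_two_mul_finrank (fun c hc c' hc' => ?_) (by omega)
    exact GRSCode.sum_mul_eq_zero ha lam hvv (by omega) hc hc'

/-- [JX2, Corollary 2.4].  Let `F` be a finite field of odd cardinality `q`,
`n` an even positive integer with `n ≤ q`, `k = n/2`, and `a 0, …, a (n-1)` distinct elements
of `F`.  If there is `λ ∈ F^*` such that `λ · L_a(a i)⁻¹` is a nonzero square for all `i`,
then there are nonzero `v i` with `v i ^ 2 = λ · L_a(a i)⁻¹` such that `GRS_{n/2}(a, v)` is an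
MDS Euclidean self-dual code of length `n`: it has dimension `n/2`, minimum distance
`n/2 + 1`, and equals its Euclidean dual. -/
theorem GRSCode_MDS_selfDual (F : Type*) [Field F] [Fintype F] [DecidableEq F]
    (hq : Odd (Fintype.card F))
    {n : ℕ} (hn : Even n) (hn0 : 0 < n) (hnq : n ≤ Fintype.card F)
    (a : Fin n → F) (ha : Function.Injective a)
    (lam : F) (hlam : lam ≠ 0)
    (hsq : ∀ i, ∃ b : F, b ≠ 0 ∧
      lam * (∏ j ∈ Finset.univ.erase i, (a i - a j))⁻¹ = b ^ 2) :
    ∃ v : Fin n → F, (∀ i, v i ≠ 0) ∧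
      (∀ i, v i ^ 2 = lam * (∏ j ∈ Finset.univ.erase i, (a i - a j))⁻¹) ∧
      Module.finrank F (GRSCode n (n / 2) a v) = n / 2 ∧
      IsMinDist (GRSCode n (n / 2) a v) (n / 2 + 1) ∧
      GRSCode n (n / 2) a v = dualCode (GRSCode n (n / 2) a v) :=
  GRSCode_MDS_selfDual_general F hn hn0 a ha lam hsq
end

section
/- Let q = r^2 where r is an odd prime power, let g be a primitive element of F_q^* (a generator of the multiplicative group), and set β = g^{r−1}. Let s ≥ 1 be an integer and let i be an integer with 0 ≤ i ≤ s − 1. Define u = ∏_{0 ≤ l ≤ s−1, l ≠ i} (β^{−2i} − β^{−2l}) ∈ F_q. Then u^r = (−1)^{s−1} · β^{2((s−2)i + s(s−1)/2)} · u. -/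
open Finset

private lemma zpow_sum₀ {α : Type*} {F : Type*} [CommGroupWithZero F] (b : F) (hb : b ≠ 0)
    (s : Finset α) (f : α → ℤ) : b ^ (∑ a ∈ s, f a) = ∏ a ∈ s, b ^ f a := by
  classical
  induction s using Finset.cons_induction with
  | empty => simp
  | cons a s ha ih => rw [Finset.sum_cons, Finset.prod_cons, zpow_add₀ hb, ih]

/-- Let `q = r²` with `r` an odd prime power, `g` a primitive element of
`F^*`, and `β = g^{r-1}`.  For `s ≥ 1` and `0 ≤ i ≤ s - 1`, the element
`u = ∏_{0 ≤ l ≤ s-1, l ≠ i} (β^{-2i} - β^{-2l})` satisfies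
`u^r = (-1)^{s-1} · β^{2((s-2)i + s(s-1)/2)} · u`.
(The exponent `2((s-2)i + s(s-1)/2) = 2(s-2)i + s(s-1)` is taken as an integer.) -/
theorem pow_r_of_prod_zpow_sub (F : Type*) [Field F] [Fintype F]
    (r : ℕ) (hr : IsPrimePow r) (hrodd : Odd r) (hcard : Fintype.card F = r ^ 2)
    (g : F) (hg : orderOf g = Fintype.card F - 1)
    (s : ℕ) (hs : 1 ≤ s) (i : ℕ) (hi : i ≤ s - 1) :
    (∏ l ∈ (Finset.range s).erase i,
        ((g ^ (r - 1)) ^ (-2 * (i : ℤ)) - (g ^ (r - 1)) ^ (-2 * (l : ℤ)))) ^ r =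
      (-1 : F) ^ (s - 1) * (g ^ (r - 1)) ^ (2 * ((s : ℤ) - 2) * (i : ℤ) + (s : ℤ) * ((s : ℤ) - 1)) *
        ∏ l ∈ (Finset.range s).erase i,
          ((g ^ (r - 1)) ^ (-2 * (i : ℤ)) - (g ^ (r - 1)) ^ (-2 * (l : ℤ))) := by
  classical
  obtain ⟨p, k, hp, hk, hpk⟩ := hr
  have hp' : p.Prime := hp.nat_prime
  have hr1 : 1 < r := by rw [← hpk]; exact Nat.one_lt_pow (by omega) hp'.one_lt
  -- characteristic is p
  have hchar : CharP F p := by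
    obtain ⟨c', hcp, hcF⟩ := FiniteField.card F (ringChar F)
    have hcard' : (p : ℕ) ^ (2 * k) = ringChar F ^ (c' : ℕ) := by
      rw [← hcF, hcard, ← hpk, ← pow_mul, mul_comm k 2]
    have hdvd : p ∣ ringChar F ^ (c' : ℕ) := hcard' ▸ dvd_pow_self p (by omega)
    have hpr : ringChar F = p :=
      ((Nat.prime_dvd_prime_iff_eq hp' hcp).mp (hp'.dvd_of_dvd_pow hdvd)).symm
    exact hpr ▸ ringChar.charP F
  haveI := hchar
  haveI : ExpChar F p := ExpChar.prime hp'
  set β : F := g ^ (r - 1) with hβ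
  have hg0 : g ≠ 0 := by
    intro h
    have h1 : g ^ (Fintype.card F - 1) = 1 := hg ▸ pow_orderOf_eq_one g
    have hc1 : 1 < Fintype.card F := Fintype.one_lt_card
    rw [h, zero_pow (by omega)] at h1
    exact zero_ne_one h1
  have hβ0 : β ≠ 0 := pow_ne_zero _ hg0
  -- β ^ (r+1) = 1
  have hβr : β ^ (r + 1) = 1 := by
    rw [hβ, ← pow_mul]
    have h1 : (r - 1) * (r + 1) = r ^ 2 - 1 := by
      obtain ⟨n, rfl⟩ : ∃ n, r = n + 1 := ⟨r - 1, by omega⟩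
      have h2 : (n + 1) ^ 2 = n * (n + 1 + 1) + 1 := by ring
      simp only [Nat.add_sub_cancel]
      omega
    rw [h1, ← hcard, ← hg]
    exact pow_orderOf_eq_one g
  have hβrz : β ^ ((r : ℤ) + 1) = 1 := by
    rw [show ((r : ℤ) + 1) = ((r + 1 : ℕ) : ℤ) by push_cast; ring, zpow_natCast, hβr]
  -- (β ^ m) ^ r = β ^ (-m)
  have key : ∀ m : ℤ, (β ^ m) ^ r = β ^ (-m) := by
    intro m
    rw [← zpow_natCast (β ^ m) r, ← zpow_mul]
    have hm : m * (r : ℤ) = -m + ((r : ℤ) + 1) * m := by ring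
    rw [hm, zpow_add₀ hβ0, zpow_mul, hβrz, one_zpow, mul_one]
  -- Frobenius additivity
  have frob : ∀ x y : F, (x - y) ^ r = x ^ r - y ^ r := by
    intro x y
    rw [← hpk]
    exact sub_pow_expChar_pow x y k
  have hir : i ∈ Finset.range s := Finset.mem_range.mpr (by omega)
  rw [← Finset.prod_pow]
  have step : ∀ l : ℕ, ((β : F) ^ (-2 * (i : ℤ)) - β ^ (-2 * (l : ℤ))) ^ r
      = (-1) * β ^ (2 * (i : ℤ) + 2 * (l : ℤ)) * (β ^ (-2 * (i : ℤ)) - β ^ (-2 * (l : ℤ))) := by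
    intro l
    rw [frob, key, key,
      show -(-2 * (i : ℤ)) = 2 * i by ring, show -(-2 * (l : ℤ)) = 2 * l by ring,
      mul_sub, mul_assoc, mul_assoc, ← zpow_add₀ hβ0, ← zpow_add₀ hβ0,
      show 2 * (i : ℤ) + 2 * l + -2 * i = 2 * l by ring,
      show 2 * (i : ℤ) + 2 * l + -2 * l = 2 * i by ring]
    ring
  simp only [step]
  rw [Finset.prod_mul_distrib, Finset.prod_mul_distrib, Finset.prod_const,
    ← zpow_sum₀ β hβ0]
  have hcardE : ((Finset.range s).erase i).card = s - 1 := by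
    rw [Finset.card_erase_of_mem hir, Finset.card_range]
  have hsum : ∑ l ∈ (Finset.range s).erase i, (2 * (i : ℤ) + 2 * (l : ℤ))
      = 2 * ((s : ℤ) - 2) * (i : ℤ) + (s : ℤ) * ((s : ℤ) - 1) := by
    rw [Finset.sum_erase_eq_sub hir, Finset.sum_add_distrib, Finset.sum_const,
      Finset.card_range, nsmul_eq_mul]
    have h2 : ∑ l ∈ Finset.range s, (2 * (l : ℤ)) = (s : ℤ) * ((s : ℤ) - 1) := by
      have hn : (∑ l ∈ Finset.range s, l) * 2 = s * (s - 1) := Finset.sum_range_id_mul_two s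
      have hc : ((∑ l ∈ Finset.range s, l : ℕ) : ℤ) * 2 = (s : ℤ) * ((s : ℤ) - 1) := by
        rw [show ((∑ l ∈ Finset.range s, l : ℕ) : ℤ) * 2 = (((∑ l ∈ Finset.range s, l) * 2 : ℕ) : ℤ)
          by push_cast; ring, hn]
        push_cast [Nat.cast_sub hs]
        ring
      rw [← hc, Nat.cast_sum, Finset.sum_mul]
      exact Finset.sum_congr rfl fun _ _ => mul_comm _ _
    rw [h2]
    ring
  rw [hcardE, hsum]
end

section
/- Let q = r^2 where r is an odd prime power, let g be a primitive element of F_q^*, set γ = g^{(r−1)/2} and ξ = γ^{r−1}. Let s ≥ 1 and j ≥ 0 be integers. Define u = ∏_{h=0}^{s−1} (ξ^{2j} − ξ^{2h+1}) ∈ F_q. Then u^r = (−1)^s · ξ^{−(2sj + s^2)} · u. -/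
open Finset

lemma prod_zpow_aux {F : Type*} [Field F] {x : F} (hx : x ≠ 0) (s : Finset ℕ) (f : ℕ → ℤ) :
    ∏ i ∈ s, x ^ f i = x ^ (∑ i ∈ s, f i) := by
  induction s using Finset.cons_induction with
  | empty => simp
  | cons a t ha ih => rw [Finset.prod_cons, Finset.sum_cons, zpow_add₀ hx, ih]

/-- Let `q = r²` with `r` an odd prime power, `g` a primitive element of
`F^*`, `γ = g^{(r-1)/2}` and `ξ = γ^{r-1}`.  For integers `s ≥ 1` and `j ≥ 0`, the element
`u = ∏_{h=0}^{s-1} (ξ^{2j} - ξ^{2h+1})` satisfies `u^r = (-1)^s · ξ^{-(2sj + s²)} · u`. -/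
theorem pow_r_of_prod_xi_sub (F : Type*) [Field F] [Fintype F]
    (r : ℕ) (hr : IsPrimePow r) (hrodd : Odd r) (hcard : Fintype.card F = r ^ 2)
    (g : F) (hg : orderOf g = Fintype.card F - 1)
    (s : ℕ) (hs : 1 ≤ s) (j : ℕ) :
    (∏ h ∈ Finset.range s,
        (((g ^ ((r - 1) / 2)) ^ (r - 1)) ^ (2 * j) -
          ((g ^ ((r - 1) / 2)) ^ (r - 1)) ^ (2 * h + 1))) ^ r =
      (-1 : F) ^ s *
        ((g ^ ((r - 1) / 2)) ^ (r - 1)) ^ (-(2 * (s : ℤ) * (j : ℤ) + (s : ℤ) ^ 2)) *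
        ∏ h ∈ Finset.range s,
          (((g ^ ((r - 1) / 2)) ^ (r - 1)) ^ (2 * j) -
            ((g ^ ((r - 1) / 2)) ^ (r - 1)) ^ (2 * h + 1)) := by
  obtain ⟨p, k, hp, hk, hpk⟩ := hr
  have hp' : p.Prime := hp.nat_prime
  haveI : Fact p.Prime := ⟨hp'⟩
  have hr1 : 1 < r := by
    rw [← hpk]; exact Nat.one_lt_pow hk.ne' hp'.one_lt
  -- characteristic is p
  have hchar : CharP F p := by
    haveI := ringChar.charP F
    obtain ⟨n, hprime, hcard'⟩ := FiniteField.card F (ringChar F)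
    have hdvd : ringChar F ∣ p := by
      have : ringChar F ∣ p ^ (2 * k) := by
        rw [mul_comm 2 k, pow_mul, hpk, ← hcard, hcard']
        exact dvd_pow_self _ (by positivity)
      exact hprime.dvd_of_dvd_pow this
    have : ringChar F = p := (Nat.prime_dvd_prime_iff_eq hprime hp').mp hdvd
    rwa [← this]
  haveI := hchar
  set ξ : F := ((g ^ ((r - 1) / 2)) ^ (r - 1)) with hξdef
  have hrr : (r - 1) * (r + 1) = r ^ 2 - 1 := by
    obtain ⟨m, rfl⟩ : ∃ m, r = m + 1 := ⟨r - 1, by omega⟩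
    have h2 : (m + 1) ^ 2 = m * (m + 1 + 1) + 1 := by ring
    simp [h2]
  have hxi1 : ξ ^ (r + 1) = 1 := by
    rw [hξdef, ← pow_mul, ← pow_mul, ← orderOf_dvd_iff_pow_eq_one, hg, hcard, hrr]
    exact dvd_mul_left _ _
  have hξ0 : ξ ≠ 0 := by
    intro h
    rw [h, zero_pow (by omega)] at hxi1
    exact zero_ne_one hxi1
  have hinv : ξ ^ r = ξ⁻¹ := by
    have : ξ ^ r * ξ = 1 := by rw [← pow_succ]; exact hxi1
    field_simp at this ⊢
    linear_combination this
  have keyz : ∀ A B : ℤ, ξ ^ (-A) - ξ ^ (-B) = -1 * ξ ^ (-(A + B)) * (ξ ^ A - ξ ^ B) := by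
    intro A B
    have e1 : -(A + B) + A = -B := by ring
    have e2 : -(A + B) + B = -A := by ring
    rw [neg_one_mul, neg_mul, mul_sub, ← zpow_add₀ hξ0, ← zpow_add₀ hξ0, e1, e2, neg_sub]
  have hzr : ∀ n : ℕ, (ξ ^ n) ^ r = ξ ^ (-(n : ℤ)) := fun n => by
    rw [pow_right_comm, hinv, inv_pow, ← zpow_natCast ξ n, ← zpow_neg]
  have key : ∀ h : ℕ, (ξ ^ (2 * j) - ξ ^ (2 * h + 1)) ^ r =
      -1 * ξ ^ (-(2 * (j : ℤ) + (2 * (h : ℤ) + 1))) * (ξ ^ (2 * j) - ξ ^ (2 * h + 1)) := by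
    intro h
    have hsub : (ξ ^ (2 * j) - ξ ^ (2 * h + 1)) ^ r =
        (ξ ^ (2 * j)) ^ r - (ξ ^ (2 * h + 1)) ^ r := by
      rw [← hpk]; exact sub_pow_char_pow _ _ _
    rw [hsub, hzr, hzr, keyz, zpow_natCast, zpow_natCast]
    push_cast
    ring_nf
  have hsum : ∀ m : ℕ, ∑ h ∈ Finset.range m, (-(2 * (j : ℤ) + (2 * (h : ℤ) + 1))) =
      -(2 * (m : ℤ) * (j : ℤ) + (m : ℤ) ^ 2) := by
    intro m
    induction m with
    | zero => simp
    | succ n ih => rw [Finset.sum_range_succ, ih]; push_cast; ring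
  calc (∏ h ∈ Finset.range s, (ξ ^ (2 * j) - ξ ^ (2 * h + 1))) ^ r
      = ∏ h ∈ Finset.range s, (ξ ^ (2 * j) - ξ ^ (2 * h + 1)) ^ r := by
        rw [Finset.prod_pow]
    _ = ∏ h ∈ Finset.range s,
          (-1 * ξ ^ (-(2 * (j : ℤ) + (2 * (h : ℤ) + 1))) * (ξ ^ (2 * j) - ξ ^ (2 * h + 1))) :=
        Finset.prod_congr rfl fun h _ => key h
    _ = (-1 : F) ^ s * ξ ^ (-(2 * (s : ℤ) * (j : ℤ) + (s : ℤ) ^ 2)) *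
          ∏ h ∈ Finset.range s, (ξ ^ (2 * j) - ξ ^ (2 * h + 1)) := by
        rw [Finset.prod_mul_distrib, Finset.prod_mul_distrib, Finset.prod_const,
          prod_zpow_aux hξ0, hsum, Finset.card_range]
end

section
/- Let q = r^2 where r is an odd prime power, let g be a primitive element of F_q^*, set γ = g^{(r−1)/2} and ξ = γ^{r−1}. Let s ≥ 1 be an integer and let i be an integer with 0 ≤ i ≤ s − 1. Define u = ∏_{0 ≤ l ≤ s−1, l ≠ i} (ξ^{2i+1} − ξ^{2l+1}) ∈ F_q. Then u^r = (−1)^{s−1} · ξ^{−((s−2)(2i+1) + s^2)} · u. -/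
/-!
Since `r` divides `|F| = r²`, it is a power of the characteristic, so `y ↦ y ^ r` is a ring
endomorphism of `F`; it sends `ξ`, an `(r - 1)`-th power and hence an `(r + 1)`-th root of unity,
to `ξ⁻¹`. Each factor `ξ ^ a - ξ ^ b` is therefore mapped to
`ξ⁻ᵃ - ξ⁻ᵇ = -ξ^(-(a + b)) (ξ ^ a - ξ ^ b)`, and the product collects the sign `(-1) ^ (s - 1)`
and the exponent `∑_{l ≠ i} (2i + 2l + 2) = (s - 2)(2i + 1) + s²`.
-/

open Finset

theorem FiniteField.exists_ringHom_eq_pow_of_dvd_card {F : Type*} [Field F] [Fintype F] {r : ℕ}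
    (hr : r ∣ Fintype.card F) : ∃ φ : F →+* F, ∀ y, φ y = y ^ r := by
  obtain ⟨p, hchar, n, hp, hcard⟩ := FiniteField.card' F
  obtain ⟨k, -, rfl⟩ := (Nat.dvd_prime_pow hp).mp (hcard ▸ hr)
  have : Fact p.Prime := ⟨hp⟩
  exact ⟨iterateFrobenius F p k, fun _ => rfl⟩

-- Stated with `⁻¹` rather than as `(y ^ (r - 1)) ^ (r + 1) = 1` so that it also holds at `y = 0`.
theorem FiniteField.pow_sub_one_pow_eq_inv_of_card_eq_sq {F : Type*} [Field F] [Fintype F]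
    {r : ℕ} (hcard : Fintype.card F = r ^ 2) (y : F) : (y ^ (r - 1)) ^ r = (y ^ (r - 1))⁻¹ := by
  have hr : 1 ≤ r := Nat.one_le_iff_ne_zero.2 fun h => by simp [h] at hcard
  rcases eq_or_ne y 0 with rfl | hy
  · rcases hr.eq_or_lt with rfl | hr
    · simp
    · simp [zero_pow (Nat.sub_pos_of_lt hr).ne', zero_pow (by omega : r ≠ 0)]
  · refine eq_inv_of_mul_eq_one_left ?_
    calc (y ^ (r - 1)) ^ r * y ^ (r - 1) = y ^ (Fintype.card F - 1) := by
          rw [← pow_succ, ← pow_mul, hcard]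
          congr 1
          zify [hr, Nat.one_le_pow 2 r hr]
          ring
      _ = 1 := FiniteField.pow_card_sub_one_eq_one y hy

section MapEqInv

variable {K : Type*} [Field K] (φ : K →+* K) {x : K}

theorem map_pow_sub_pow_of_map_eq_inv (hx : φ x = x⁻¹) {a b : ℕ} (ha : a ≠ 0) (hb : b ≠ 0) :
    φ (x ^ a - x ^ b) = -(x ^ (a + b))⁻¹ * (x ^ a - x ^ b) := by
  rw [map_sub, map_pow, map_pow, hx, inv_pow, inv_pow]
  rcases eq_or_ne x 0 with rfl | hx0
  · simp [ha, hb]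
  · field_simp
    ring

theorem map_prod_pow_sub_pow_of_map_eq_inv (hx : φ x = x⁻¹) {ι : Type*} (S : Finset ι)
    {a : ℕ} {b : ι → ℕ} (ha : a ≠ 0) (hb : ∀ l ∈ S, b l ≠ 0) :
    φ (∏ l ∈ S, (x ^ a - x ^ b l)) =
      (-1) ^ #S * (x ^ ∑ l ∈ S, (a + b l))⁻¹ * ∏ l ∈ S, (x ^ a - x ^ b l) := by
  rw [map_prod, prod_congr rfl fun l hl => map_pow_sub_pow_of_map_eq_inv φ hx ha (hb l hl),
    prod_mul_distrib, prod_neg, prod_inv_distrib, prod_pow_eq_pow_sum]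

end MapEqInv

theorem sum_range_two_mul_add_one (n : ℕ) : ∑ l ∈ range n, (2 * l + 1) = n ^ 2 := by
  induction n with
  | zero => rfl
  | succ n ih => rw [sum_range_succ, ih]; ring

theorem sum_erase_range_odd_add_odd {s i : ℕ} (hi : i < s) :
    ((∑ l ∈ (range s).erase i, ((2 * i + 1) + (2 * l + 1)) : ℕ) : ℤ) =
      ((s : ℤ) - 2) * (2 * i + 1) + (s : ℤ) ^ 2 := by
  have hfull : ∑ l ∈ range s, ((2 * i + 1) + (2 * l + 1)) = s * (2 * i + 1) + s ^ 2 := by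
    rw [sum_add_distrib, sum_const, card_range, smul_eq_mul, sum_range_two_mul_add_one]
  have h := sum_erase_add (range s) (fun l => (2 * i + 1) + (2 * l + 1)) (mem_range.2 hi)
  have h' := congrArg (Nat.cast : ℕ → ℤ) (h.trans hfull)
  push_cast at h' ⊢
  linear_combination h'

theorem pow_r_of_prod_xi_odd_sub_general (F : Type*) [Field F] [Fintype F]
    (r : ℕ) (hcard : Fintype.card F = r ^ 2)
    (g : F)
    (s : ℕ) (hs : 1 ≤ s) (i : ℕ) (hi : i ≤ s - 1) :
    (∏ l ∈ (Finset.range s).erase i,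
        (((g ^ ((r - 1) / 2)) ^ (r - 1)) ^ (2 * i + 1) -
          ((g ^ ((r - 1) / 2)) ^ (r - 1)) ^ (2 * l + 1))) ^ r =
      (-1 : F) ^ (s - 1) *
        ((g ^ ((r - 1) / 2)) ^ (r - 1)) ^
          (-(((s : ℤ) - 2) * (2 * (i : ℤ) + 1) + (s : ℤ) ^ 2)) *
        ∏ l ∈ (Finset.range s).erase i,
          (((g ^ ((r - 1) / 2)) ^ (r - 1)) ^ (2 * i + 1) -
            ((g ^ ((r - 1) / 2)) ^ (r - 1)) ^ (2 * l + 1)) := by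
  set ξ := (g ^ ((r - 1) / 2)) ^ (r - 1)
  have his : i < s := by omega
  obtain ⟨φ, hφ⟩ :=
    FiniteField.exists_ringHom_eq_pow_of_dvd_card (hcard ▸ dvd_pow_self r two_ne_zero)
  have hξ : φ ξ = ξ⁻¹ :=
    (hφ ξ).trans (FiniteField.pow_sub_one_pow_eq_inv_of_card_eq_sq hcard _)
  have hexp : (ξ ^ ∑ l ∈ (range s).erase i, ((2 * i + 1) + (2 * l + 1)))⁻¹ =
      ξ ^ (-(((s : ℤ) - 2) * (2 * (i : ℤ) + 1) + (s : ℤ) ^ 2)) := by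
    rw [← sum_erase_range_odd_add_odd his, zpow_neg, zpow_natCast]
  rw [← hφ, map_prod_pow_sub_pow_of_map_eq_inv φ hξ _ (by omega) fun l _ => by omega, hexp,
    card_erase_of_mem (mem_range.2 his), card_range]

/-- Let `q = r²` with `r` an odd prime power, `g` a primitive element of
`F^*`, `γ = g^{(r-1)/2}` and `ξ = γ^{r-1}`.  For an integer `s ≥ 1` and `0 ≤ i ≤ s - 1`,
the element `u = ∏_{0 ≤ l ≤ s-1, l ≠ i} (ξ^{2i+1} - ξ^{2l+1})` satisfies
`u^r = (-1)^{s-1} · ξ^{-((s-2)(2i+1) + s²)} · u`. -/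
theorem pow_r_of_prod_xi_odd_sub (F : Type*) [Field F] [Fintype F]
    (r : ℕ) (hr : IsPrimePow r) (hrodd : Odd r) (hcard : Fintype.card F = r ^ 2)
    (g : F) (hg : orderOf g = Fintype.card F - 1)
    (s : ℕ) (hs : 1 ≤ s) (i : ℕ) (hi : i ≤ s - 1) :
    (∏ l ∈ (Finset.range s).erase i,
        (((g ^ ((r - 1) / 2)) ^ (r - 1)) ^ (2 * i + 1) -
          ((g ^ ((r - 1) / 2)) ^ (r - 1)) ^ (2 * l + 1))) ^ r =
      (-1 : F) ^ (s - 1) *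
        ((g ^ ((r - 1) / 2)) ^ (r - 1)) ^
          (-(((s : ℤ) - 2) * (2 * (i : ℤ) + 1) + (s : ℤ) ^ 2)) *
        ∏ l ∈ (Finset.range s).erase i,
          (((g ^ ((r - 1) / 2)) ^ (r - 1)) ^ (2 * i + 1) -
            ((g ^ ((r - 1) / 2)) ^ (r - 1)) ^ (2 * l + 1)) :=
  pow_r_of_prod_xi_odd_sub_general F r hcard g s hs i hi
end

section
/- Let q = r^2 where r is an odd prime power with r ≡ 1 (mod 4), let g be a primitive element of F_q^*, and set α = g^{r+1}, β = g^{r−1}, γ = g^{(r+1)/2}. Let 1 ≤ s ≤ (r+1)/2 and 1 ≤ t ≤ (r−1)/2, and let A ⊆ F_q be the set of the n = s(r−1) + t(r+1) distinct elements { β^l α^h : 0 ≤ l ≤ s−1, 0 ≤ h ≤ r−2 } ∪ { γ^{2l+1} β^h : 0 ≤ l ≤ t−1, 0 ≤ h ≤ r }. Then for any 0 ≤ i ≤ s−1 and 0 ≤ j ≤ r−2, ∏_{x ∈ A, x ≠ β^i α^j} (β^i α^j − x) = β^{i(r−2)} · (r−1) · α^{−j} · ∏_{0 ≤ l ≤ s−1,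 l ≠ i} (β^{−2i} − β^{−2l}) · ∏_{l=0}^{t−1} (α^{j(r+1)} − γ^{(2l+1)(r+1)}), where r−1 is interpreted as (r−1)·1 in F_q. -/
open Finset
open Polynomial

lemma aux_prod_coset {F : Type*} [Field F] {n : ℕ} {ζ : F} (hζ : IsPrimitiveRoot ζ n)
    (hn : 0 < n) (c d : F) : ∏ h ∈ Finset.range n, (c - ζ ^ h * d) = c ^ n - d ^ n := by
  have h := X_pow_sub_C_eq_prod hζ hn (rfl : d ^ n = d ^ n)
  have h2 := congrArg (Polynomial.eval c) h
  simpa [Polynomial.eval_prod] using h2.symm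

lemma aux_prod_erase {F : Type*} [Field F] [DecidableEq F] {n : ℕ} {ζ : F}
    (hζ : IsPrimitiveRoot ζ n) (hn : 0 < n) {j : ℕ} (hj : j < n) :
    ∏ h ∈ (Finset.range n).erase j, (ζ ^ j - ζ ^ h) = (n : F) * ζ ^ (j * (n - 1)) := by
  have h := X_pow_sub_C_eq_prod hζ hn (one_pow n)
  simp only [mul_one, Polynomial.C_1] at h
  set S : Multiset F := (Finset.range n).val.map (ζ ^ ·) with hS
  have hprod : (Multiset.map (fun a => X - C a) S).prod = X ^ n - 1 := by
    rw [hS, Multiset.map_map, h, Finset.prod_eq_multiset_prod]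
    rfl
  have hmem : ζ ^ j ∈ S := Multiset.mem_map_of_mem _ (by simpa using hj)
  have key := eval_multiset_prod_X_sub_C_derivative hmem
  rw [hprod] at key
  rw [Polynomial.derivative_sub, Polynomial.derivative_one, Polynomial.derivative_X_pow,
    sub_zero, Polynomial.eval_mul, Polynomial.eval_pow, Polynomial.eval_X,
    Polynomial.eval_C, ← pow_mul] at key
  rw [Finset.prod_eq_multiset_prod, Finset.erase_val]
  have heq : ((Finset.range n).val.erase j).map (fun h => ζ ^ j - ζ ^ h)
      = (S.erase (ζ ^ j)).map (fun a => ζ ^ j - a) := by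
    rw [hS, ← Multiset.map_erase_of_mem _ _ (by simpa using hj), Multiset.map_map]
    rfl
  rw [heq, ← key]

/-- computation of `L_a(β^i α^j)` in the proof of Theorem 1(i).
Let `q = r²` with `r` an odd prime power, `r ≡ 1 (mod 4)`, let `g` be a primitive element
of `F^*`, and set `α = g^{r+1}`, `β = g^{r-1}`, `γ = g^{(r+1)/2}`.  For `1 ≤ s ≤ (r+1)/2`
and `1 ≤ t ≤ (r-1)/2`, let `A ⊆ F` be the set
`{ β^l α^h : 0 ≤ l ≤ s-1, 0 ≤ h ≤ r-2 } ∪ { γ^{2l+1} β^h : 0 ≤ l ≤ t-1, 0 ≤ h ≤ r }`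
(of the `n = s(r-1) + t(r+1)` distinct evaluation points).  Then for `0 ≤ i ≤ s-1` and
`0 ≤ j ≤ r-2`:
`∏_{x ∈ A, x ≠ β^i α^j} (β^i α^j - x)
  = β^{i(r-2)} · (r-1) · α^{-j} · ∏_{0 ≤ l ≤ s-1, l ≠ i} (β^{-2i} - β^{-2l})
      · ∏_{l=0}^{t-1} (α^{j(r+1)} - γ^{(2l+1)(r+1)})`,
where `r - 1` is interpreted as `(r-1)·1` in `F`. -/
theorem prod_L_eval_r1mod4 (F : Type*) [Field F] [Fintype F] [DecidableEq F]
    (r : ℕ) (hr : IsPrimePow r) (hrodd : Odd r) (hr1 : r % 4 = 1)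
    (hcard : Fintype.card F = r ^ 2)
    (g : F) (hg : orderOf g = Fintype.card F - 1)
    (s t : ℕ) (hs1 : 1 ≤ s) (hs2 : s ≤ (r + 1) / 2)
    (ht1 : 1 ≤ t) (ht2 : t ≤ (r - 1) / 2)
    (i j : ℕ) (hi : i ≤ s - 1) (hj : j ≤ r - 2) :
    let α : F := g ^ (r + 1)
    let β : F := g ^ (r - 1)
    let γ : F := g ^ ((r + 1) / 2)
    let A : Finset F :=
      ((Finset.range s ×ˢ Finset.range (r - 1)).image fun p => β ^ p.1 * α ^ p.2) ∪
        ((Finset.range t ×ˢ Finset.range (r + 1)).image fun p => γ ^ (2 * p.1 + 1) * β ^ p.2)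
    ∏ x ∈ A.erase (β ^ i * α ^ j), (β ^ i * α ^ j - x) =
      β ^ (i * (r - 2)) * ((r : F) - 1) * (α ^ j)⁻¹ *
        (∏ l ∈ (Finset.range s).erase i, (β ^ (-2 * (i : ℤ)) - β ^ (-2 * (l : ℤ)))) *
        ∏ l ∈ Finset.range t, (α ^ (j * (r + 1)) - γ ^ ((2 * l + 1) * (r + 1))) := by
  intro α β γ A
  have hr2 := hr.two_le
  have hr5 : 5 ≤ r := by omega
  have h1r : 1 ≤ r := by omega
  obtain ⟨m1, hm1⟩ : ∃ m1, r + 1 = 2 * m1 := ⟨(r + 1) / 2, by omega⟩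
  obtain ⟨m2, hm2n⟩ : ∃ m2, r - 1 = 2 * m2 := ⟨(r - 1) / 2, by omega⟩
  have hγm : γ = g ^ m1 := by
    show g ^ ((r + 1) / 2) = g ^ m1
    congr 1
    omega
  have hNfact : (r - 1) * (r + 1) = r ^ 2 - 1 := by
    obtain ⟨k, rfl⟩ : ∃ k, r = k + 1 := ⟨r - 1, by omega⟩
    have h1 : (k + 1) ^ 2 = k * (k + 1 + 1) + 1 := by ring
    simp only [Nat.add_sub_cancel]
    omega
  have hg' : orderOf g = r ^ 2 - 1 := by rw [hg, hcard]
  have horderα : orderOf α = r - 1 := by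
    show orderOf (g ^ (r + 1)) = r - 1
    rw [orderOf_pow' _ (by omega : r + 1 ≠ 0), hg',
      Nat.gcd_eq_right ⟨r - 1, by rw [← hNfact]; ring⟩, ← hNfact,
      Nat.mul_div_cancel _ (by omega : 0 < r + 1)]
  have horderβ : orderOf β = r + 1 := by
    show orderOf (g ^ (r - 1)) = r + 1
    rw [orderOf_pow' _ (by omega : r - 1 ≠ 0), hg',
      Nat.gcd_eq_right ⟨r + 1, by rw [← hNfact]⟩, ← hNfact,
      mul_comm, Nat.mul_div_cancel _ (by omega : 0 < r - 1)]
  have hαprim : IsPrimitiveRoot α (r - 1) := horderα ▸ IsPrimitiveRoot.orderOf α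
  have hβprim : IsPrimitiveRoot β (r + 1) := horderβ ▸ IsPrimitiveRoot.orderOf β
  have hα1 : α ^ (r - 1) = 1 := by rw [← horderα]; exact pow_orderOf_eq_one α
  have hβ1 : β ^ (r + 1) = 1 := by rw [← horderβ]; exact pow_orderOf_eq_one β
  have hg0 : g ≠ 0 := by
    intro h0
    have h1 : g ^ (r ^ 2 - 1) = 1 := hg' ▸ pow_orderOf_eq_one g
    rw [h0, zero_pow (show r ^ 2 - 1 ≠ 0 by rw [← hNfact]; exact Nat.mul_ne_zero (by omega) (by omega))] at h1
    exact zero_ne_one h1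
  have hlog : ∀ x y : ℕ, g ^ x = g ^ y → ((r : ℤ) - 1) * ((r : ℤ) + 1) ∣ (y : ℤ) - (x : ℤ) := by
    intro x y hxy
    have hu : (Units.mk0 g hg0) ^ x = (Units.mk0 g hg0) ^ y :=
      Units.ext (by simpa using hxy)
    have h := pow_eq_pow_iff_modEq.mp hu
    rw [← orderOf_units, Units.val_mk0, hg'] at h
    have h2 := h.dvd
    have hcast : ((r ^ 2 - 1 : ℕ) : ℤ) = ((r : ℤ) - 1) * ((r : ℤ) + 1) := by
      rw [← hNfact, Nat.cast_mul, Nat.cast_sub h1r, Nat.cast_add, Nat.cast_one]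
    rwa [hcast] at h2
  have eC1 : ∀ l h : ℕ, β ^ l * α ^ h = g ^ ((r - 1) * l + (r + 1) * h) := fun l h => by
    rw [pow_add, pow_mul, pow_mul]
  have eC2 : ∀ l h : ℕ, γ ^ (2 * l + 1) * β ^ h
      = g ^ (m1 * (2 * l + 1) + (r - 1) * h) := fun l h => by
    rw [hγm, pow_add g, pow_mul g, pow_mul g]
  have inj1 : ∀ p ∈ Finset.range s ×ˢ Finset.range (r - 1),
      ∀ q ∈ Finset.range s ×ˢ Finset.range (r - 1),
      β ^ p.1 * α ^ p.2 = β ^ q.1 * α ^ q.2 → p = q := by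
    rintro ⟨l, h⟩ hp ⟨l', h'⟩ hq heq
    simp only [Finset.mem_product, Finset.mem_range] at hp hq
    rw [eC1, eC1] at heq
    obtain ⟨c, hc⟩ := hlog _ _ heq
    push_cast [Nat.cast_sub h1r] at hc
    have hm2z : (r : ℤ) + 1 = 2 * (m1 : ℤ) := by omega
    have key1 : (2 : ℤ) * (m1 : ℤ) ∣ 2 * ((l' : ℤ) - l) :=
      ⟨(l' : ℤ) - l + ((h' : ℤ) - h) - ((r : ℤ) - 1) * c, by
        linear_combination (-1 : ℤ) * hc +
          ((l' : ℤ) - l + ((h' : ℤ) - h) - ((r : ℤ) - 1) * c) * hm2z⟩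
    have hl : l = l' := by
      have h0 := Int.eq_zero_of_abs_lt_dvd key1 (by rw [abs_lt]; constructor <;> omega)
      omega
    subst hl
    have hhh : (h' : ℤ) - h = ((r : ℤ) - 1) * c := by
      have hne : ((r : ℤ) + 1) ≠ 0 := by omega
      apply mul_left_cancel₀ hne
      linear_combination hc
    have hh : h = h' := by
      have h0 := Int.eq_zero_of_abs_lt_dvd ⟨c, hhh⟩ (by rw [abs_lt]; constructor <;> omega)
      omega
    simp [hh]
  have inj2 : ∀ p ∈ Finset.range t ×ˢ Finset.range (r + 1),
      ∀ q ∈ Finset.range t ×ˢ Finset.range (r + 1),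
      γ ^ (2 * p.1 + 1) * β ^ p.2 = γ ^ (2 * q.1 + 1) * β ^ q.2 → p = q := by
    rintro ⟨l, h⟩ hp ⟨l', h'⟩ hq heq
    simp only [Finset.mem_product, Finset.mem_range] at hp hq
    rw [eC2, eC2] at heq
    obtain ⟨c, hc⟩ := hlog _ _ heq
    push_cast [Nat.cast_sub h1r] at hc
    have hm2z : (r : ℤ) + 1 = 2 * (m1 : ℤ) := by omega
    have hm2z' : (r : ℤ) - 1 = 2 * (m2 : ℤ) := by omega
    have key1 : (2 : ℤ) * (m2 : ℤ) ∣ 2 * ((l' : ℤ) - l) :=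
      ⟨((r : ℤ) + 1) * c - ((h' : ℤ) - h) - ((l' : ℤ) - l), by
        linear_combination hc + ((l' : ℤ) - l) * hm2z +
          (((r : ℤ) + 1) * c - ((h' : ℤ) - h) - ((l' : ℤ) - l)) * hm2z'⟩
    have hl : l = l' := by
      have h0 := Int.eq_zero_of_abs_lt_dvd key1 (by rw [abs_lt]; constructor <;> omega)
      omega
    subst hl
    have hhh : (h' : ℤ) - h = ((r : ℤ) + 1) * c := by
      have hne : ((r : ℤ) - 1) ≠ 0 := by omega
      apply mul_left_cancel₀ hne
      linear_combination hc
    have hh : h = h' := by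
      have h0 := Int.eq_zero_of_abs_lt_dvd ⟨c, hhh⟩ (by rw [abs_lt]; constructor <;> omega)
      omega
    simp [hh]
  have hdisj : Disjoint
      ((Finset.range s ×ˢ Finset.range (r - 1)).image fun p => β ^ p.1 * α ^ p.2)
      ((Finset.range t ×ˢ Finset.range (r + 1)).image fun p => γ ^ (2 * p.1 + 1) * β ^ p.2) := by
    rw [Finset.disjoint_left]
    rintro x hx1 hx2
    obtain ⟨⟨l, h⟩, hmem1, rfl⟩ := Finset.mem_image.mp hx1
    obtain ⟨⟨l', h'⟩, hmem2, hx⟩ := Finset.mem_image.mp hx2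
    rw [eC1, eC2] at hx
    obtain ⟨c, hc⟩ := hlog _ _ hx
    push_cast [Nat.cast_sub h1r] at hc
    obtain ⟨a1, ha1⟩ : (2 : ℤ) ∣ ((r : ℤ) - 1) * l := Dvd.dvd.mul_right (by omega) _
    obtain ⟨a2, ha2⟩ : (2 : ℤ) ∣ ((r : ℤ) + 1) * h := Dvd.dvd.mul_right (by omega) _
    obtain ⟨a4, ha4⟩ : (2 : ℤ) ∣ ((r : ℤ) - 1) * h' := Dvd.dvd.mul_right (by omega) _
    obtain ⟨a5, ha5⟩ : (2 : ℤ) ∣ ((r : ℤ) - 1) * ((r : ℤ) + 1) * c :=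
      Dvd.dvd.mul_right (Dvd.dvd.mul_right (by omega) _) _
    obtain ⟨u, hu⟩ : ∃ u : ℤ, (m1 : ℤ) = 2 * u + 1 :=
      ⟨(((r + 1) / 4 : ℕ) : ℤ), by omega⟩
    have hodd : (m1 : ℤ) * (2 * (l' : ℤ) + 1)
        = 2 * (2 * u * l' + u + l') + 1 := by rw [hu]; ring
    have hfin : (2 : ℤ) * a1 + 2 * a2 - (2 * (2 * u * l' + u + l') + 1 + 2 * a4)
        - 2 * a5 = 0 := by linarith [hc, ha1, ha2, ha4, ha5, hodd]
    omega
  -- stage 3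
  have hb1 : ∀ k : ℕ, β ^ (k * (r + 1)) = 1 := fun k => by
    rw [mul_comm, pow_mul, hβ1, one_pow]
  have ha1' : ∀ k : ℕ, α ^ (k * (r - 1)) = 1 := fun k => by
    rw [mul_comm, pow_mul, hα1, one_pow]
  have hzpow : ∀ k : ℕ, (β ^ k) ^ (r - 1) = β ^ (-2 * (k : ℤ)) := by
    intro k
    have hneg : (-2 * (k : ℤ)) = -((2 * k : ℕ) : ℤ) := by push_cast; ring
    rw [hneg, zpow_neg, zpow_natCast, ← pow_mul]
    refine eq_inv_of_mul_eq_one_left ?_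
    rw [← pow_add]
    have hexp : k * (r - 1) + 2 * k = k * (r + 1) := by
      obtain ⟨w, rfl⟩ : ∃ w, r = w + 1 := ⟨r - 1, by omega⟩
      simp only [Nat.add_sub_cancel]
      ring
    rw [hexp, hb1]
  have hiS : i < s := by omega
  have hjS : j < r - 1 := by omega
  set a : F := β ^ i * α ^ j with ha
  set C1 : Finset F :=
    (Finset.range s ×ˢ Finset.range (r - 1)).image (fun p => β ^ p.1 * α ^ p.2) with hC1
  set C2 : Finset F :=
    (Finset.range t ×ˢ Finset.range (r + 1)).image
      (fun p => γ ^ (2 * p.1 + 1) * β ^ p.2) with hC2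
  have hA : A = C1 ∪ C2 := rfl
  have hijS : (i, j) ∈ Finset.range s ×ˢ Finset.range (r - 1) := by
    simp [Finset.mem_product, hiS, hjS]
  have haC1 : a ∈ C1 := Finset.mem_image.mpr ⟨(i, j), hijS, rfl⟩
  have haC2 : a ∉ C2 := fun hmem => Finset.disjoint_left.mp hdisj haC1 hmem
  have hsplit : A.erase a = C1.erase a ∪ C2 := by
    rw [hA, Finset.erase_union_distrib, Finset.erase_eq_of_notMem haC2]
  rw [hsplit, Finset.prod_union (hdisj.mono_left (Finset.erase_subset _ _))]
  have hP2 : ∏ x ∈ C2, (a - x)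
      = ∏ l ∈ Finset.range t, (α ^ (j * (r + 1)) - γ ^ ((2 * l + 1) * (r + 1))) := by
    rw [hC2, Finset.prod_image inj2, Finset.prod_product]
    refine Finset.prod_congr rfl fun l _ => ?_
    show ∏ h ∈ Finset.range (r + 1), (a - γ ^ (2 * l + 1) * β ^ h)
      = α ^ (j * (r + 1)) - γ ^ ((2 * l + 1) * (r + 1))
    calc ∏ h ∈ Finset.range (r + 1), (a - γ ^ (2 * l + 1) * β ^ h)
        = ∏ h ∈ Finset.range (r + 1), (a - β ^ h * γ ^ (2 * l + 1)) :=
          Finset.prod_congr rfl fun h _ => by ring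
      _ = a ^ (r + 1) - (γ ^ (2 * l + 1)) ^ (r + 1) := aux_prod_coset hβprim (by omega) _ _
      _ = α ^ (j * (r + 1)) - γ ^ ((2 * l + 1) * (r + 1)) := by
          rw [ha, mul_pow, ← pow_mul β i, ← pow_mul α j, hb1, one_mul, ← pow_mul γ]
  have himg : C1.erase a = ((Finset.range s ×ˢ Finset.range (r - 1)).erase (i, j)).image
      (fun p => β ^ p.1 * α ^ p.2) := by
    ext x
    constructor
    · intro hx
      obtain ⟨hxa, hxC⟩ := Finset.mem_erase.mp hx
      obtain ⟨p, hp, rfl⟩ := Finset.mem_image.mp (hC1 ▸ hxC)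
      refine Finset.mem_image.mpr ⟨p, Finset.mem_erase.mpr ⟨?_, hp⟩, rfl⟩
      rintro rfl
      exact hxa rfl
    · intro hx
      obtain ⟨p, hp, rfl⟩ := Finset.mem_image.mp hx
      obtain ⟨hpij, hpS⟩ := Finset.mem_erase.mp hp
      refine Finset.mem_erase.mpr ⟨?_, Finset.mem_image.mpr ⟨p, hpS, rfl⟩⟩
      intro hxa
      exact hpij (inj1 p hpS (i, j) hijS hxa)
  have hsplitS : (Finset.range s ×ˢ Finset.range (r - 1)).erase (i, j)
      = ((Finset.range s).erase i ×ˢ Finset.range (r - 1))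
        ∪ ({i} ×ˢ (Finset.range (r - 1)).erase j) := by
    ext ⟨x, y⟩
    simp only [Finset.mem_erase, Finset.mem_product, Finset.mem_union, Finset.mem_range,
      Finset.mem_singleton, ne_eq, Prod.mk.injEq]
    omega
  have hdisj2 : Disjoint ((Finset.range s).erase i ×ˢ Finset.range (r - 1))
      ({i} ×ˢ (Finset.range (r - 1)).erase j) := by
    rw [Finset.disjoint_left]
    rintro ⟨x, y⟩ hx hy
    simp only [Finset.mem_product, Finset.mem_erase, Finset.mem_singleton,
      Finset.mem_range] at hx hy
    exact hx.1.1 hy.1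
  have hP1 : ∏ x ∈ C1.erase a, (a - x)
      = (∏ l ∈ (Finset.range s).erase i, (β ^ (-2 * (i : ℤ)) - β ^ (-2 * (l : ℤ))))
        * (β ^ (i * (r - 2)) * ((r : F) - 1) * (α ^ j)⁻¹) := by
    rw [himg, Finset.prod_image (fun p hp q hq => inj1 p (Finset.mem_of_mem_erase hp) q
      (Finset.mem_of_mem_erase hq)), hsplitS,
      Finset.prod_union hdisj2, Finset.prod_product, Finset.prod_product,
      Finset.prod_singleton]
    have hfac1 : ∀ l ∈ (Finset.range s).erase i,
        (∏ h ∈ Finset.range (r - 1), (a - β ^ l * α ^ h))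
          = β ^ (-2 * (i : ℤ)) - β ^ (-2 * (l : ℤ)) := by
      intro l _
      calc ∏ h ∈ Finset.range (r - 1), (a - β ^ l * α ^ h)
          = ∏ h ∈ Finset.range (r - 1), (a - α ^ h * β ^ l) :=
            Finset.prod_congr rfl fun h _ => by ring
        _ = a ^ (r - 1) - (β ^ l) ^ (r - 1) := aux_prod_coset hαprim (by omega) _ _
        _ = β ^ (-2 * (i : ℤ)) - β ^ (-2 * (l : ℤ)) := by
            rw [ha, mul_pow, ← pow_mul α j, ha1', mul_one, hzpow, hzpow]
    have hfac2 : ∏ h ∈ (Finset.range (r - 1)).erase j, (a - β ^ i * α ^ h)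
        = β ^ (i * (r - 2)) * ((r : F) - 1) * (α ^ j)⁻¹ := by
      have hterm : ∀ h, a - β ^ i * α ^ h = β ^ i * (α ^ j - α ^ h) := fun h => by
        rw [ha]; ring
      calc ∏ h ∈ (Finset.range (r - 1)).erase j, (a - β ^ i * α ^ h)
          = ∏ h ∈ (Finset.range (r - 1)).erase j, (β ^ i * (α ^ j - α ^ h)) :=
            Finset.prod_congr rfl fun h _ => hterm h
        _ = (β ^ i) ^ ((Finset.range (r - 1)).erase j).card
              * ∏ h ∈ (Finset.range (r - 1)).erase j, (α ^ j - α ^ h) := by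
            rw [Finset.prod_mul_distrib, Finset.prod_const]
        _ = β ^ (i * (r - 2)) * ((r : F) - 1) * (α ^ j)⁻¹ := by
            rw [Finset.card_erase_of_mem (by simpa using hjS), Finset.card_range,
              aux_prod_erase hαprim (by omega) hjS]
            have hc1 : r - 1 - 1 = r - 2 := by omega
            have hc2 : ((r - 1 : ℕ) : F) = (r : F) - 1 := by
              rw [Nat.cast_sub h1r, Nat.cast_one]
            rw [hc1, hc2, ← pow_mul]
            have hinv : α ^ (j * (r - 2)) = (α ^ j)⁻¹ := by
              refine eq_inv_of_mul_eq_one_left ?_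
              rw [← pow_add]
              have hexp : j * (r - 2) + j = j * (r - 1) := by
                obtain ⟨w, rfl⟩ : ∃ w, r = w + 2 := ⟨r - 2, by omega⟩
                simp only [Nat.add_sub_cancel]
                have h2 : w + 2 - 1 = w + 1 := by omega
                rw [h2]
                ring
              rw [hexp, ha1']
            rw [hinv]
            ring
    show (∏ l ∈ (Finset.range s).erase i, ∏ h ∈ Finset.range (r - 1), (a - β ^ l * α ^ h))
        * (∏ h ∈ (Finset.range (r - 1)).erase j, (a - β ^ i * α ^ h)) = _
    rw [Finset.prod_congr rfl hfac1, hfac2]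
  rw [hP1, hP2]
  ring
end
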